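/- Let λ₀, λ₁, λ₂ > 0, β₀ ∈ ℝ, t ≥ 0, and let η₁, η₂ ∈ ℝ satisfy η₁ t < λ₁ and η₂ t < λ₂. Then ∫₀^∞ ∫₀^∞ (1 − η₁ t/λ₁)(1 − η₂ t/λ₂) · exp( (η₁ x₁ + η₂ x₂ − λ₀ e^{β₀}) t ) · λ₁ e^{−λ₁ x₁} · λ₂ e^{−λ₂ x₂} dx₁ dx₂ = ( exp(−λ₀ t) )^{exp(β₀)}, where the right-hand side is a real power. In other words, the marginal survival functions satisfy S^{(1)}(t) = ( S^{(0)}(t) )^{exp(β₀)} with S^{(0)}(t) = exp(−λ₀ t). -/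

import Mathlib

open MeasureTheory

lemma int_exp_aux (b : ℝ) (hb : 0 < b) :
    ∫ x in Set.Ioi (0 : ℝ), Real.exp (-b * x) = 1 / b := by
  have h := integral_exp_neg_mul_rpow (p := 1) (b := b) one_pos hb
  norm_num at h
  simp_rw [neg_mul]
  rw [h, Real.rpow_neg_one, one_div]

lemma int_exp_aux' (l η t : ℝ) (h : η * t < l) :
    ∫ x in Set.Ioi (0 : ℝ), Real.exp ((η * t - l) * x) = 1 / (l - η * t) := by
  have hb : 0 < l - η * t := by linarith
  have : ∀ x : ℝ, Real.exp ((η * t - l) * x) = Real.exp (-(l - η * t) * x) := by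
    intro x; ring_nf
  simp_rw [this, int_exp_aux _ hb]

/-- The simulated potential outcomes are compatible with the marginal causal Cox
model: the marginal survival function of `T⁽¹⁾` satisfies
`S⁽¹⁾(t) = (S⁽⁰⁾(t)) ^ exp(β₀)` with `S⁽⁰⁾(t) = exp(−λ₀ t)`. -/
theorem stmt_4 (l₀ l₁ l₂ : ℝ) (hl₀ : 0 < l₀) (hl₁ : 0 < l₁) (hl₂ : 0 < l₂)
    (β₀ : ℝ) (t : ℝ) (ht : 0 ≤ t)
    (η₁ η₂ : ℝ) (h₁ : η₁ * t < l₁) (h₂ : η₂ * t < l₂) :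
    (∫ x₁ in Set.Ioi (0 : ℝ), ∫ x₂ in Set.Ioi (0 : ℝ),
        (1 - η₁ * t / l₁) * (1 - η₂ * t / l₂) *
          Real.exp ((η₁ * x₁ + η₂ * x₂ - l₀ * Real.exp β₀) * t) *
          (l₁ * Real.exp (-l₁ * x₁)) * (l₂ * Real.exp (-l₂ * x₂))) =
      Real.exp (-l₀ * t) ^ Real.exp β₀ := by
  have key : ∀ x₁ x₂ : ℝ,
      (1 - η₁ * t / l₁) * (1 - η₂ * t / l₂) *
          Real.exp ((η₁ * x₁ + η₂ * x₂ - l₀ * Real.exp β₀) * t) *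
          (l₁ * Real.exp (-l₁ * x₁)) * (l₂ * Real.exp (-l₂ * x₂)) =
      ((1 - η₁ * t / l₁) * Real.exp (-(l₀ * Real.exp β₀ * t)) *
          (l₁ * Real.exp ((η₁ * t - l₁) * x₁))) *
        ((1 - η₂ * t / l₂) * (l₂ * Real.exp ((η₂ * t - l₂) * x₂))) := by
    intro x₁ x₂
    have he : Real.exp ((η₁ * x₁ + η₂ * x₂ - l₀ * Real.exp β₀) * t) *
        Real.exp (-l₁ * x₁) * Real.exp (-l₂ * x₂) =
        Real.exp (-(l₀ * Real.exp β₀ * t)) * Real.exp ((η₁ * t - l₁) * x₁) *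
          Real.exp ((η₂ * t - l₂) * x₂) := by
      rw [← Real.exp_add, ← Real.exp_add, ← Real.exp_add, ← Real.exp_add]
      ring_nf
    linarith [mul_eq_mul_left_iff.mpr
      (Or.inl he : _ ∨ ((1 - η₁ * t / l₁) * (1 - η₂ * t / l₂) * l₁ * l₂) = 0)]
  simp only [key, MeasureTheory.integral_const_mul, MeasureTheory.integral_mul_const,
    int_exp_aux' l₂ η₂ t h₂, int_exp_aux' l₁ η₁ t h₁]
  have hE : Real.exp (-(l₀ * Real.exp β₀ * t)) = Real.exp (-l₀ * t * Real.exp β₀) := by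
    ring_nf
  rw [hE, ← Real.exp_mul]
  have hd1 : l₁ - η₁ * t ≠ 0 := by linarith
  have hd2 : l₂ - η₂ * t ≠ 0 := by linarith
  field_simp
  exact div_self (by linarith)
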